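/- Let Ω ⊂ ℝⁿ be a bounded smooth domain with n ≥ 1, μ, ν > 0, and let u, v ∈ C²(Ω̄) with v > 0 on Ω̄ satisfy 0 = Δv − μv + νu in Ω with ∂v/∂n = 0 on ∂Ω and u ≥ 0. Then ∫_Ω |∇v|²/v² dx ≤ μ|Ω|. -/

import Mathlib

/-!
Multiplying the equation by `1 / v` and integrating by parts gives
`∫ |∇v|² / v² + ν ∫ u / v = μ |Ω|`, and the second term is nonnegative. Concretely, on `Ω` the
field `∇v / v` has divergence `Δv / v - |∇v|² / v² = μ - ν u / v - |∇v|² / v²`, and it vanishes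
on `∂Ω` by the Neumann condition, so its divergence integrates to zero.

For a `C¹` field `g` vanishing on `∂Ω`, `∫_Ω ∂ᵢ gᵢ = 0` by slicing: by Fubini it is an
integral over lines parallel to the `i`-th axis, and on each line the slice of `Ω` is a bounded
open subset of `ℝ`. Such a set is a countable disjoint union of open intervals whose endpoints
lie on its frontier, where `gᵢ` vanishes, so the fundamental theorem of calculus kills every
interval.
-/

open MeasureTheory Set

theorem ContinuousOn.integrableOn_of_isBounded {X E : Type*} [MetricSpace X] [ProperSpace X]
    [MeasurableSpace X] [OpensMeasurableSpace X] [NormedAddCommGroup E] {μ : Measure X}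
    [IsFiniteMeasureOnCompacts μ] {s : Set X} {f : X → E} (hf : ContinuousOn f (closure s))
    (hs : Bornology.IsBounded s) : IntegrableOn f s μ :=
  (hf.integrableOn_compact hs.isCompact_closure).mono_set subset_closure

theorem Real.exists_Ioo_subset_of_isOpen_of_isBounded {s : Set ℝ} (hs : IsOpen s)
    (hb : Bornology.IsBounded s) {x : ℝ} (hx : x ∈ s) :
    ∃ a b, x ∈ Ioo a b ∧ Ioo a b ⊆ s ∧ a ∉ s ∧ b ∉ s := by
  obtain ⟨l, hl⟩ := hb.bddBelow
  obtain ⟨r, hr⟩ := hb.bddAbove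
  have hAne : (sᶜ ∩ Iic x).Nonempty :=
    ⟨l - 1, fun h => by linarith [(hl h : l ≤ l - 1)], mem_Iic.2 (by linarith [(hl hx : l ≤ x)])⟩
  have hBne : (sᶜ ∩ Ici x).Nonempty :=
    ⟨r + 1, fun h => by linarith [(hr h : r + 1 ≤ r)], mem_Ici.2 (by linarith [(hr hx : x ≤ r)])⟩
  have hAbdd : BddAbove (sᶜ ∩ Iic x) := ⟨x, fun _ h => h.2⟩
  have hBbdd : BddBelow (sᶜ ∩ Ici x) := ⟨x, fun _ h => h.2⟩
  have ha := (hs.isClosed_compl.inter isClosed_Iic).csSup_mem hAne hAbdd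
  have hb := (hs.isClosed_compl.inter isClosed_Ici).csInf_mem hBne hBbdd
  refine ⟨_, _, ⟨ha.2.lt_of_ne fun h => ha.1 (by rw [h]; exact hx),
    hb.2.lt_of_ne' fun h => hb.1 (by rw [h]; exact hx)⟩, fun t ht => ?_, ha.1, hb.1⟩
  by_contra hts
  rcases le_total t x with htx | hxt
  · exact (le_csSup hAbdd ⟨hts, htx⟩).not_gt ht.1
  · exact (csInf_le hBbdd ⟨hts, hxt⟩).not_gt ht.2

theorem eq_of_Ioo_subset_of_endpoints_notMem {α : Type*} [LinearOrder α] {s : Set α}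
    {a b a' b' y : α} (h : Ioo a b ⊆ s) (h' : Ioo a' b' ⊆ s) (ha : a ∉ s) (hb : b ∉ s) (ha' : a' ∉ s)
    (hb' : b' ∉ s) (hy : y ∈ Ioo a b) (hy' : y ∈ Ioo a' b') : a = a' ∧ b = b' := by
  refine ⟨le_antisymm ?_ ?_, le_antisymm ?_ ?_⟩ <;> by_contra! hlt
  · exact ha (h' ⟨hlt, hy.1.trans hy'.2⟩)
  · exact ha' (h ⟨hlt, hy'.1.trans hy.2⟩)
  · exact hb' (h ⟨hy.1.trans hy'.2, hlt⟩)
  · exact hb (h' ⟨hy'.1.trans hy.2, hlt⟩)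

theorem integral_eq_zero_of_hasDerivAt_of_eq_zero_on_frontier {E : Type*} [NormedAddCommGroup E]
    [NormedSpace ℝ E] [CompleteSpace E] {s : Set ℝ} (hs : IsOpen s) (hb : Bornology.IsBounded s)
    {f f' : ℝ → E} (hf : ∀ x ∈ closure s, HasDerivAt f (f' x) x)
    (hf' : ContinuousOn f' (closure s)) (h0 : ∀ x ∈ frontier s, f x = 0) :
    ∫ x in s, f' x = 0 := by
  -- the connected components of `s`, recorded by their endpoints
  set T := {p : ℝ × ℝ | p.1 < p.2 ∧ Ioo p.1 p.2 ⊆ s ∧ p.1 ∉ s ∧ p.2 ∉ s}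
  have hdisj : T.PairwiseDisjoint fun p => Ioo p.1 p.2 := by
    rintro p ⟨-, hp, hp₁, hp₂⟩ q ⟨-, hq, hq₁, hq₂⟩ hpq
    refine Set.disjoint_left.2 fun y hyp hyq => hpq ?_
    obtain ⟨h₁, h₂⟩ := eq_of_Ioo_subset_of_endpoints_notMem hp hq hp₁ hp₂ hq₁ hq₂ hyp hyq
    exact Prod.ext h₁ h₂
  have : Countable T :=
    (hdisj.countable_of_isOpen (fun _ _ => isOpen_Ioo) fun _ hp => nonempty_Ioo.2 hp.1).to_subtype
  have hcover : ⋃ p : T, Ioo p.1.1 p.1.2 = s := by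
    refine Subset.antisymm (iUnion_subset fun p => p.2.2.1) fun x hx => ?_
    obtain ⟨a, b, hxab, hab, ha, hb⟩ := Real.exists_Ioo_subset_of_isOpen_of_isBounded hs hb hx
    exact mem_iUnion.2 ⟨⟨(a, b), hxab.1.trans hxab.2, hab, ha, hb⟩, hxab⟩
  have hzero (p : ℝ × ℝ) (hp : p ∈ T) : ∫ x in Ioo p.1 p.2, f' x = 0 := by
    obtain ⟨hlt, hsub, h₁, h₂⟩ := hp
    have hIcc : Icc p.1 p.2 ⊆ closure s := closure_Ioo hlt.ne ▸ closure_mono hsub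
    have hfr : ∀ x ∈ Icc p.1 p.2, x ∉ s → x ∈ frontier s := fun x hx hxs =>
      hs.frontier_eq ▸ ⟨hIcc hx, hxs⟩
    rw [← integral_Ioc_eq_integral_Ioo, ← intervalIntegral.integral_of_le hlt.le,
      intervalIntegral.integral_eq_sub_of_hasDerivAt
        (fun x hx => hf x (hIcc (uIcc_of_le hlt.le ▸ hx)))
        ((hf'.mono hIcc).intervalIntegrable_of_Icc hlt.le),
      h0 _ (hfr _ (right_mem_Icc.2 hlt.le) h₂), h0 _ (hfr _ (left_mem_Icc.2 hlt.le) h₁), sub_zero]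
  rw [← hcover, integral_iUnion (fun _ => measurableSet_Ioo) (hdisj.subtype _ _)
    (hcover ▸ hf'.integrableOn_of_isBounded hb)]
  simp [hzero]

theorem integral_fderiv_apply_along_line_eq_zero {E F : Type*} [NormedAddCommGroup E]
    [NormedSpace ℝ E] [CompleteSpace E] [NormedAddCommGroup F] [NormedSpace ℝ F]
    {Ω : Set F} (hΩ : IsOpen Ω) (hb : Bornology.IsBounded Ω) {g : F → E} {g' : F → F →L[ℝ] E}
    (hg : ∀ x ∈ closure Ω, HasFDerivAt g (g' x) x) (hg' : ContinuousOn g' (closure Ω))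
    (h0 : ∀ x ∈ frontier Ω, g x = 0) (p : F) {w : F} (hw : w ≠ 0) :
    ∫ t in (fun t : ℝ => p + t • w) ⁻¹' Ω, g' (p + t • w) w = 0 := by
  set L : ℝ → F := fun t => p + t • w
  have hL (t : ℝ) : HasDerivAt L w t := by
    simpa [L] using ((hasDerivAt_id t).smul_const w).const_add p
  have hLc : Continuous L := continuous_iff_continuousAt.2 fun t => (hL t).continuousAt
  have hbL : Bornology.IsBounded (L ⁻¹' Ω) := by
    obtain ⟨R, hR⟩ := hb.subset_closedBall p
    refine (Metric.isBounded_closedBall (x := 0) (r := R / ‖w‖)).subset fun t ht => ?_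
    have hRt := hR ht
    rw [Metric.mem_closedBall, dist_eq_norm, add_sub_cancel_left, norm_smul] at hRt
    rwa [Metric.mem_closedBall, dist_zero_right, le_div_iff₀ (norm_pos_iff.2 hw)]
  refine integral_eq_zero_of_hasDerivAt_of_eq_zero_on_frontier (hΩ.preimage hLc) hbL
    (fun t ht => (hg _ (hLc.closure_preimage_subset Ω ht)).comp_hasDerivAt t (hL t))
    ((hg'.comp hLc.continuousOn fun t ht => hLc.closure_preimage_subset Ω ht).clm_apply
      continuousOn_const)
    fun t ht => h0 _ (hLc.frontier_preimage_subset Ω ht)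

theorem EuclideanSpace.integral_fderiv_apply_single_eq_zero {E : Type*} [NormedAddCommGroup E]
    [NormedSpace ℝ E] [CompleteSpace E] {n : ℕ} {Ω : Set (EuclideanSpace ℝ (Fin n))}
    (hΩ : IsOpen Ω) (hb : Bornology.IsBounded Ω) {g : EuclideanSpace ℝ (Fin n) → E}
    {g' : EuclideanSpace ℝ (Fin n) → EuclideanSpace ℝ (Fin n) →L[ℝ] E}
    (hg : ∀ x ∈ closure Ω, HasFDerivAt g (g' x) x) (hg' : ContinuousOn g' (closure Ω))
    (h0 : ∀ x ∈ frontier Ω, g x = 0) (i : Fin n) :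
    ∫ x in Ω, g' x (EuclideanSpace.single i 1) = 0 := by
  cases n with
  | zero => exact i.elim0
  | succ n =>
  let e : EuclideanSpace ℝ (Fin (n + 1)) := EuclideanSpace.single i 1
  let D := fun x => g' x e
  let Φ : ℝ × (Fin n → ℝ) ≃ᵐ EuclideanSpace ℝ (Fin (n + 1)) :=
    (MeasurableEquiv.piFinSuccAbove (fun _ => ℝ) i).symm.trans (MeasurableEquiv.toLp 2 _)
  have hΦ : MeasurePreserving Φ (volume.prod volume) volume :=
    (EuclideanSpace.volume_preserving_symm_measurableEquiv_toLp _).symm.comp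
      (volume_preserving_piFinSuccAbove (fun _ => ℝ) i).symm
  have hΦline (t : ℝ) (y : Fin n → ℝ) : Φ (t, y) = Φ (0, y) + t • e := by
    ext j
    simp only [Φ, e, MeasurableEquiv.trans_apply, MeasurableEquiv.piFinSuccAbove_symm_apply,
      MeasurableEquiv.coe_toLp, Fin.insertNthEquiv_apply, PiLp.add_apply, PiLp.smul_apply]
    rcases Fin.eq_self_or_eq_succAbove i j with rfl | ⟨k, rfl⟩ <;> simp
  have hint : Integrable (Ω.indicator D) := (integrable_indicator_iff hΩ.measurableSet).2 <|
    (hg'.clm_apply continuousOn_const).integrableOn_of_isBounded hb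
  have hslice (y : Fin n → ℝ) : ∫ t, Ω.indicator D (Φ (t, y)) = 0 := by
    have hind (t : ℝ) : Ω.indicator D (Φ (t, y)) = ((fun t : ℝ => Φ (0, y) + t • e) ⁻¹' Ω).indicator
        (fun t => D (Φ (0, y) + t • e)) t := by
      rw [hΦline t y]
      rfl
    rw [integral_congr_ae (.of_forall hind),
      integral_indicator (hΩ.measurableSet.preimage (by fun_prop))]
    exact integral_fderiv_apply_along_line_eq_zero hΩ hb hg hg' h0 _
      ((PiLp.single_eq_zero_iff 2 i).not.2 one_ne_zero)
  rw [← integral_indicator hΩ.measurableSet, ← hΦ.integral_comp Φ.measurableEmbedding,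
    integral_prod_symm (fun z => Ω.indicator D (Φ z))
      ((hΦ.integrable_comp_emb Φ.measurableEmbedding).2 hint)]
  simp [hslice]

theorem EuclideanSpace.integral_sum_fderiv_apply_single_eq_zero {n : ℕ}
    {Ω U : Set (EuclideanSpace ℝ (Fin n))} (hΩ : IsOpen Ω) (hb : Bornology.IsBounded Ω)
    (hU : IsOpen U) (hΩU : closure Ω ⊆ U) {g : Fin n → EuclideanSpace ℝ (Fin n) → ℝ}
    (hg : ∀ i, ContDiffOn ℝ 1 (g i) U) (h0 : ∀ i, ∀ x ∈ frontier Ω, g i x = 0) :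
    ∫ x in Ω, ∑ i, fderiv ℝ (g i) x (EuclideanSpace.single i 1) = 0 := by
  have hg' (i : Fin n) : ContinuousOn (fderiv ℝ (g i)) (closure Ω) :=
    ((hg i).continuousOn_fderiv_of_isOpen hU le_rfl).mono hΩU
  rw [integral_finsetSum _ fun i _ =>
    ((hg' i).clm_apply continuousOn_const).integrableOn_of_isBounded hb]
  refine Finset.sum_eq_zero fun i _ => integral_fderiv_apply_single_eq_zero hΩ hb
    (fun x hx => (((hg i).differentiableOn one_ne_zero x (hΩU hx)).differentiableAt
      (hU.mem_nhds (hΩU hx))).hasFDerivAt) (hg' i) (h0 i) i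

theorem sum_fderiv_apply_sq_eq_norm_gradient_sq {ι E : Type*} [Fintype ι] [NormedAddCommGroup E]
    [InnerProductSpace ℝ E] [CompleteSpace E] (b : OrthonormalBasis ι ℝ E) (f : E → ℝ) (x : E) :
    ∑ i, fderiv ℝ f x (b i) ^ 2 = ‖gradient f x‖ ^ 2 := by
  simp_rw [← b.sum_sq_inner_left (gradient f x), inner_gradient_left]

section

variable {E : Type*} [NormedAddCommGroup E] [NormedSpace ℝ E] {v : E → ℝ}

theorem contDiffOn_fderiv_apply_div (hv : ContDiff ℝ 2 v) (w : E) :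
    ContDiffOn ℝ 1 (fun y => fderiv ℝ v y w / v y) {y | v y ≠ 0} :=
  ((hv.fderiv_right le_rfl).clm_apply contDiff_const).contDiffOn.div
    (hv.of_le one_le_two).contDiffOn fun _ hy => hy

theorem fderiv_fderiv_apply_div_apply (hv : ContDiff ℝ 2 v) {x : E} (hx : v x ≠ 0) (w : E) :
    fderiv ℝ (fun y => fderiv ℝ v y w / v y) x w =
      fderiv ℝ (fderiv ℝ v) x w w / v x - fderiv ℝ v x w ^ 2 / v x ^ 2 := by
  have h1 : HasFDerivAt (fun y => fderiv ℝ v y w) ((fderiv ℝ (fderiv ℝ v) x).flip w) x := by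
    simpa using ((hv.fderiv_right le_rfl).differentiable one_ne_zero x).hasFDerivAt.clm_apply
      (hasFDerivAt_const w x)
  have h2 : HasFDerivAt v (fderiv ℝ v x) x := (hv.differentiable two_ne_zero x).hasFDerivAt
  have h3 : HasFDerivAt (fun y => fderiv ℝ v y w * (v y)⁻¹) _ x :=
    h1.mul ((hasDerivAt_inv hx).comp_hasFDerivAt x h2)
  rw [show (fun y => fderiv ℝ v y w / v y) = fun y => fderiv ℝ v y w * (v y)⁻¹ from rfl, h3.fderiv]
  simp only [neg_smul, smul_neg, add_apply, neg_apply,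
    smul_apply, smul_eq_mul, ContinuousLinearMap.flip_apply]
  field_simp
  ring

end

theorem sum_fderiv_fderiv_apply_div_apply {ι E : Type*} [Fintype ι] [NormedAddCommGroup E]
    [InnerProductSpace ℝ E] [CompleteSpace E] (b : OrthonormalBasis ι ℝ E) {v : E → ℝ}
    (hv : ContDiff ℝ 2 v) {x : E} (hx : v x ≠ 0) :
    ∑ i, fderiv ℝ (fun y => fderiv ℝ v y (b i) / v y) x (b i) =
      (∑ i, fderiv ℝ (fderiv ℝ v) x (b i) (b i)) / v x - ‖gradient v x‖ ^ 2 / v x ^ 2 := by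
  simp only [fderiv_fderiv_apply_div_apply hv hx, Finset.sum_sub_distrib, ← Finset.sum_div]
  rw [sum_fderiv_apply_sq_eq_norm_gradient_sq]

theorem norm_gradient_sq_div_sq_le {ι E : Type*} [Fintype ι] [NormedAddCommGroup E]
    [InnerProductSpace ℝ E] [CompleteSpace E] (b : OrthonormalBasis ι ℝ E) {u v : E → ℝ}
    {μ ν : ℝ} (hv : ContDiff ℝ 2 v) {x : E} (hvx : 0 < v x) (hν : 0 ≤ ν) (hux : 0 ≤ u x)
    (heq : ∑ i, fderiv ℝ (fderiv ℝ v) x (b i) (b i) = μ * v x - ν * u x) :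
    ‖gradient v x‖ ^ 2 / v x ^ 2 ≤
      μ - ∑ i, fderiv ℝ (fun y => fderiv ℝ v y (b i) / v y) x (b i) := by
  have hνu : 0 ≤ ν * u x / v x := by positivity
  rw [sum_fderiv_fderiv_apply_div_apply b hv hvx.ne', heq, sub_div, mul_div_cancel_right₀ _ hvx.ne']
  linarith

theorem stmt_15_general (n : ℕ) (Ω : Set (EuclideanSpace ℝ (Fin n)))
    (hopen : IsOpen Ω) (hbdd : Bornology.IsBounded Ω)
    (μ ν : ℝ) (hν : 0 < ν)
    (u v : EuclideanSpace ℝ (Fin n) → ℝ)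
    (hv : ContDiff ℝ 2 v)
    (hvpos : ∀ x ∈ closure Ω, 0 < v x)
    (hupos : ∀ x ∈ closure Ω, 0 ≤ u x)
    (heq : ∀ x ∈ Ω,
      (0:ℝ) = (∑ i : Fin n, iteratedFDeriv ℝ 2 v x
          ![EuclideanSpace.single i 1, EuclideanSpace.single i 1])
        - μ * v x + ν * u x)
    (hneumann : ∀ x ∈ frontier Ω, gradient v x = 0) :
    ∫ x in Ω, ‖gradient v x‖ ^ 2 / (v x) ^ 2 ≤ μ * (volume Ω).toReal := by
  set e : Fin n → EuclideanSpace ℝ (Fin n) := fun i => EuclideanSpace.single i 1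
  set U := {x | v x ≠ 0}
  have hU : IsOpen U := isOpen_ne_fun hv.continuous continuous_const
  have hΩU : closure Ω ⊆ U := fun x hx => (hvpos x hx).ne'
  set g : Fin n → EuclideanSpace ℝ (Fin n) → ℝ := fun i y => fderiv ℝ v y (e i) / v y
  have hg (i : Fin n) : ContDiffOn ℝ 1 (g i) U := contDiffOn_fderiv_apply_div hv (e i)
  have hpt (x) (hx : x ∈ Ω) : ‖gradient v x‖ ^ 2 / v x ^ 2 ≤ μ - ∑ i, fderiv ℝ (g i) x (e i) := by
    have hlap := heq x hx
    simp only [iteratedFDeriv_two_apply, Matrix.cons_val_zero, Matrix.cons_val_one] at hlap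
    simpa using norm_gradient_sq_div_sq_le (EuclideanSpace.basisFun (Fin n) ℝ) hv
      (hvpos x (subset_closure hx)) hν.le (hupos x (subset_closure hx))
      (by simp only [EuclideanSpace.basisFun_apply]; linarith)
  have hcont : ContinuousOn (fun x => ‖gradient v x‖ ^ 2 / v x ^ 2) (closure Ω) :=
    (((InnerProductSpace.toDual ℝ _).symm.continuous.comp
      (hv.continuous_fderiv two_ne_zero)).norm.pow 2).continuousOn.div
        (hv.continuous.pow 2).continuousOn fun x hx => pow_ne_zero 2 (hΩU hx)
  have hdivcont : ContinuousOn (fun x => ∑ i, fderiv ℝ (g i) x (e i)) (closure Ω) :=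
    continuousOn_finsetSum _ fun i _ =>
      (((hg i).continuousOn_fderiv_of_isOpen hU le_rfl).mono hΩU).clm_apply continuousOn_const
  calc ∫ x in Ω, ‖gradient v x‖ ^ 2 / v x ^ 2
      ≤ ∫ x in Ω, (μ - ∑ i, fderiv ℝ (g i) x (e i)) :=
        setIntegral_mono_on (hcont.integrableOn_of_isBounded hbdd)
          ((continuousOn_const.sub hdivcont).integrableOn_of_isBounded hbdd) hopen.measurableSet hpt
    _ = μ * (volume Ω).toReal := by
        rw [integral_sub (continuousOn_const.integrableOn_of_isBounded hbdd)
          (hdivcont.integrableOn_of_isBounded hbdd),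
          EuclideanSpace.integral_sum_fderiv_apply_single_eq_zero hopen hbdd hU hΩU hg
            fun i x hx => by simp [g, ← inner_gradient_left, hneumann x hx]]
        simp [mul_comm, Measure.real]

theorem stmt_15 (n : ℕ) (hn : 1 ≤ n) (Ω : Set (EuclideanSpace ℝ (Fin n)))
    (hopen : IsOpen Ω) (hbdd : Bornology.IsBounded Ω) (hne : Ω.Nonempty)
    (μ ν : ℝ) (hμ : 0 < μ) (hν : 0 < ν)
    (u v : EuclideanSpace ℝ (Fin n) → ℝ)
    (hu : ContDiff ℝ 2 u) (hv : ContDiff ℝ 2 v)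
    (hvpos : ∀ x ∈ closure Ω, 0 < v x)
    (hupos : ∀ x ∈ closure Ω, 0 ≤ u x)
    (heq : ∀ x ∈ Ω,
      (0:ℝ) = (∑ i : Fin n, iteratedFDeriv ℝ 2 v x
          ![EuclideanSpace.single i 1, EuclideanSpace.single i 1])
        - μ * v x + ν * u x)
    (hneumann : ∀ x ∈ frontier Ω, gradient v x = 0) :
    ∫ x in Ω, ‖gradient v x‖ ^ 2 / (v x) ^ 2 ≤ μ * (volume Ω).toReal :=
  stmt_15_general n Ω hopen hbdd μ ν hν u v hv hvpos hupos heq hneumann
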